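/- Let Pr(L = n) = 3.5^{3.5} Γ(n+3.5) x^{n-1} / (Γ(3.5) (n-1)! (x+3.5)^{n+3.5}) for n ≥ 1, with x > 0. Then Σ_{n≥1} Pr(L = n) = 1 and E[L] = 1 + (4.5/3.5) x. -/

import Mathlib

/-!
With `p = x / (x + 3.5)` and `a = 4.5`, the load satisfies
`Pr(L = m + 1) = Γ(m + a) / (Γ a · m!) · p ^ m · (1 - p) ^ a = (a + m - 1).choose m · p ^ m · (1 - p) ^ a`,
so `L - 1` is negative binomial and its law sums to `1` by the binomial series of `(1 - p) ^ (-a)`.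
Shifting the index turns `n · Pr(L - 1 = n)` into `a p / (1 - p)` times the negative binomial law of
shape `a + 1`, so `E[L - 1] = a p / (1 - p) = (4.5 / 3.5) x`.
-/

open Real Polynomial Nat

theorem Ring.choose_add_natCast_sub_one {R : Type*} [Field R] [CharZero R] (a : R) (n : ℕ) :
    Ring.choose (a + n - 1) n = (ascPochhammer R n).eval a / n ! := by
  rw [Ring.choose_eq_smul, descPochhammer_smeval_eq_ascPochhammer, ascPochhammer_smeval_eq_eval,
    smul_eq_mul]
  ring_nf

theorem Real.Gamma_natCast_add_eq_ascPochhammer_mul {a : ℝ} (ha : ∀ k : ℕ, a ≠ -k) (n : ℕ) :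
    Gamma (n + a) = (ascPochhammer ℝ n).eval a * Gamma a := by
  induction n with
  | zero => simp
  | succ n ih =>
    have hna : (n : ℝ) + a ≠ 0 := fun h => ha n (by linarith)
    rw [Nat.cast_succ, add_right_comm, Gamma_add_one hna, ih, ascPochhammer_succ_right]
    simp only [eval_mul, eval_add, eval_X, eval_natCast]
    ring

theorem Real.hasSum_choose_mul_pow (a : ℝ) {p : ℝ} (hp : |p| < 1) :
    HasSum (fun n : ℕ => Ring.choose (a + n - 1) n * p ^ n) ((1 - p) ^ a)⁻¹ := by
  have h := (one_div_one_sub_rpow_hasFPowerSeriesOnBall_zero a).hasSum (y := p)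
    (by simpa [enorm_eq_nnnorm, ← NNReal.coe_lt_coe] using hp)
  simpa [FormalMultilinearSeries.ofScalars_apply_eq, mul_comm] using h

noncomputable def negBinomialPMF (a p : ℝ) (n : ℕ) : ℝ :=
  Gamma (n + a) / (Gamma a * n !) * p ^ n * (1 - p) ^ a

section NegBinomial

variable {a p : ℝ}

theorem negBinomialPMF_eq_choose (ha : 0 < a) (p : ℝ) (n : ℕ) :
    negBinomialPMF a p n = Ring.choose (a + n - 1) n * p ^ n * (1 - p) ^ a := by
  have ha' : ∀ k : ℕ, a ≠ -k := fun k h => by linarith [(Nat.cast_nonneg k : (0 : ℝ) ≤ k)]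
  rw [negBinomialPMF, Ring.choose_add_natCast_sub_one, Gamma_natCast_add_eq_ascPochhammer_mul ha']
  field_simp [(Gamma_pos_of_pos ha).ne']

theorem hasSum_negBinomialPMF (ha : 0 < a) (hp : |p| < 1) : HasSum (negBinomialPMF a p) 1 := by
  have h1p : 0 < 1 - p := by linarith [le_abs_self p]
  have h := (hasSum_choose_mul_pow a hp).mul_right ((1 - p) ^ a)
  rw [inv_mul_cancel₀ (rpow_pos_of_pos h1p a).ne'] at h
  simpa only [funext (negBinomialPMF_eq_choose ha p)] using h

theorem natCast_succ_mul_negBinomialPMF_succ (ha : 0 < a) (hp : p < 1) (n : ℕ) :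
    ((n + 1 : ℕ) : ℝ) * negBinomialPMF a p (n + 1)
      = a * p / (1 - p) * negBinomialPMF (a + 1) p n := by
  have h1p : 0 < 1 - p := by linarith
  have hΓ : Gamma ((n + 1 : ℕ) + a) = Gamma (n + (a + 1)) := by push_cast; ring_nf
  rw [negBinomialPMF, negBinomialPMF, hΓ, Gamma_add_one ha.ne', rpow_add h1p, rpow_one,
    Nat.factorial_succ]
  push_cast
  field_simp [(Gamma_pos_of_pos ha).ne']
  ring

theorem hasSum_natCast_mul_negBinomialPMF (ha : 0 < a) (hp : |p| < 1) :
    HasSum (fun n : ℕ => n * negBinomialPMF a p n) (a * p / (1 - p)) := by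
  have h := (hasSum_negBinomialPMF (a := a + 1) (by linarith) hp).mul_left (a * p / (1 - p))
  rw [mul_one] at h
  simp only [← natCast_succ_mul_negBinomialPMF_succ ha (abs_lt.1 hp).2] at h
  simpa using HasSum.zero_add (f := fun n : ℕ => (n : ℝ) * negBinomialPMF a p n) h

end NegBinomial

theorem loadPMF_eq_negBinomialPMF {c x : ℝ} (hc : 0 < c) (hxc : 0 < x + c) (m : ℕ) :
    c ^ c * Gamma (m + 1 + c) * x ^ m / (Gamma c * m ! * (x + c) ^ ((m : ℝ) + 1 + c))
      = negBinomialPMF (c + 1) (x / (x + c)) m := by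
  have h1p : 1 - x / (x + c) = c / (x + c) := by field_simp; ring
  rw [negBinomialPMF, h1p, Gamma_add_one hc.ne', add_assoc, div_rpow hc.le hxc.le, rpow_add hxc,
    rpow_add hc, rpow_add hxc, rpow_one, rpow_one, rpow_natCast, div_pow, add_comm 1 c]
  field_simp [(Gamma_pos_of_pos hc).ne']
  rw [rpow_add_one hxc.ne']
  ring

/-- The 3.5-parameter load p.m.f. Pr(L = n) = 3.5^{3.5}Γ(n+3.5)x^{n-1}/(Γ(3.5)(n-1)!(x+3.5)^{n+3.5})
(n ≥ 1) sums to 1 and has mean E[L] = 1 + (4.5/3.5)x. -/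
theorem stmt16 (x : ℝ) (hx : 0 < x) :
    (∑' m : ℕ, (3.5 : ℝ) ^ (3.5 : ℝ) * Real.Gamma ((m : ℝ) + 1 + 3.5) * x ^ m /
        (Real.Gamma 3.5 * (m.factorial : ℝ) * (x + 3.5) ^ ((m : ℝ) + 1 + 3.5)) = 1)
    ∧ (∑' m : ℕ, ((m : ℝ) + 1) *
          ((3.5 : ℝ) ^ (3.5 : ℝ) * Real.Gamma ((m : ℝ) + 1 + 3.5) * x ^ m /
            (Real.Gamma 3.5 * (m.factorial : ℝ) * (x + 3.5) ^ ((m : ℝ) + 1 + 3.5)))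
        = 1 + (4.5 / 3.5) * x) := by
  have hp : |x / (x + 3.5)| < 1 := by
    rw [abs_of_nonneg (by positivity), div_lt_one (by positivity)]
    linarith
  have hsum := hasSum_negBinomialPMF (a := 3.5 + 1) (by norm_num) hp
  have hmean := hasSum_natCast_mul_negBinomialPMF (a := 3.5 + 1) (by norm_num) hp
  simp only [loadPMF_eq_negBinomialPMF (c := 3.5) (x := x) (by norm_num) (by positivity), add_mul,
    one_mul]
  refine ⟨hsum.tsum_eq, ?_⟩
  rw [(hmean.add hsum).tsum_eq]
  field_simp
  ring
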